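/- arXiv:math/0203201 — 2 statements merged into one kernel-verified Lean document; each statement's English description precedes it below -/
import Mathlib

section
/- Let q = e^h with h ∈ ℝ, h ≠ 0, and let ℓ be a positive half-integer. Define (2ℓ+1)×(2ℓ+1) matrices on basis |m⟩, m = -ℓ,...,ℓ: I_{21}|m⟩ = i[m]|m⟩ and I_{32}|m⟩ = A(m)|m+1⟩ - A(m-1)|m-1⟩ where A(m) = ([ℓ-m][ℓ+m+1])^{1/2} · ([m][m+1]/([2m][2m+2]))^{1/2} (with the convention giving the q-Gel'fand–Tsetlin action for so_3). Then these matrices satisfy I_{32}² I_{21} - (q^{1/2}+q^{-1/2}) I_{32} I_{21} I_{32} + I_{21} I_{32}² = -I_{21}. -/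
open Matrix

lemma key_real (h : ℝ) (hh : h ≠ 0) :
    (Real.sinh (h / 4) / Real.sinh (h / 2)) ^ 2 *
      (Real.exp (h / 2) + Real.exp (-(h / 2)) + 2) = 1 := by
  have hs4 : Real.sinh (h / 4) ≠ 0 := Real.sinh_ne_zero.mpr (by positivity)
  have hc4 : Real.cosh (h / 4) ≠ 0 := (Real.cosh_pos (h / 4)).ne'
  have hc : Real.exp (h / 2) + Real.exp (-(h / 2)) = 2 * Real.cosh (h / 2) := by
    rw [Real.cosh_eq]; ring
  have h2 : h / 2 = 2 * (h / 4) := by ring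
  have hsq : Real.cosh (h / 4) ^ 2 = Real.sinh (h / 4) ^ 2 + 1 := Real.cosh_sq _
  rw [hc, h2, Real.sinh_two_mul, Real.cosh_two_mul]
  field_simp
  nlinarith [hsq]

/-- Verification of the q-deformed relation (2) of U_q(so(3,ℂ)) on the spin-1/2
q-Gel'fand–Tsetlin representation. Here [1/2] = sinh(h/4)/sinh(h/2), the basis is
|m⟩, m = -1/2, 1/2, with I_{21}|m⟩ = i[m]|m⟩ and I_{32}|m⟩ = A(m)|m+1⟩ - A(m-1)|m-1⟩,
where A(-1/2) = [1/2] and A(1/2) = A(-3/2) = 0. -/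
theorem q_GT_so3_relation_spin_half (h : ℝ) (hh : h ≠ 0) :
    let a : ℂ := (Real.sinh (h / 4) / Real.sinh (h / 2) : ℝ)
    let I21 : Matrix (Fin 2) (Fin 2) ℂ := !![-Complex.I * a, 0; 0, Complex.I * a]
    let I32 : Matrix (Fin 2) (Fin 2) ℂ := !![0, -a; a, 0]
    I32 ^ 2 * I21 -
      (Complex.exp ((h : ℂ) / 2) + Complex.exp (-(h : ℂ) / 2)) • (I32 * I21 * I32) +
      I21 * I32 ^ 2 = -I21 := by
  intro a I21 I32
  have key : (a : ℂ) ^ 2 *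
      (Complex.exp ((h : ℂ) / 2) + Complex.exp (-(h : ℂ) / 2) + 2) = 1 := by
    have hr := key_real h hh
    rw [show ((h : ℂ) / 2) = ((h / 2 : ℝ) : ℂ) by push_cast; ring,
      show (-(h : ℂ) / 2) = ((-(h / 2) : ℝ) : ℂ) by push_cast; ring,
      ← Complex.ofReal_exp, ← Complex.ofReal_exp]
    rw [show a = ((Real.sinh (h / 4) / Real.sinh (h / 2) : ℝ) : ℂ) from rfl]
    exact_mod_cast hr
  ext i j
  fin_cases i <;> fin_cases j <;>
    simp [I21, I32, pow_two, Matrix.mul_apply, Fin.sum_univ_two, Matrix.smul_apply] <;>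
    first
      | linear_combination (Complex.I * a) * key
      | linear_combination (-Complex.I * a) * key
end

section
/- Let h > 0 and c ∈ ℂ with Im c = π/h, and write c = a + iπ/h with a ∈ ℝ. Then [c][c-1] is a real number, and [c][c-1] = -cosh(ha/2)cosh(h(a-1)/2)/sinh(h/2)² < 0. -/
/-- The symmetric q-number [z] for q = e^h. -/
noncomputable def qc (h : ℝ) (z : ℂ) : ℂ :=
  (Complex.exp ((h : ℂ) * z / 2) - Complex.exp (-((h : ℂ) * z) / 2)) /
    (Complex.exp ((h : ℂ) / 2) - Complex.exp (-(h : ℂ) / 2))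

lemma qc_line (h : ℝ) (hpos : 0 < h) (b : ℝ) :
    qc h ((b : ℂ) + (Real.pi / h : ℝ) * Complex.I) =
      Complex.I * ((Real.cosh (h * b / 2) / Real.sinh (h / 2) : ℝ) : ℂ) := by
  have hne : (h : ℂ) ≠ 0 := by exact_mod_cast hpos.ne'
  have hsinh : Real.sinh (h / 2) ≠ 0 := by
    have := Real.sinh_pos_iff.mpr (by linarith : (0:ℝ) < h / 2); linarith
  have e1 : (h : ℂ) * ((b : ℂ) + (Real.pi / h : ℝ) * Complex.I) / 2 =
      ((h * b / 2 : ℝ) : ℂ) + ((Real.pi / 2 : ℝ) : ℂ) * Complex.I := by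
    push_cast; field_simp
  have e2 : -((h : ℂ) * ((b : ℂ) + (Real.pi / h : ℝ) * Complex.I)) / 2 =
      ((-(h * b / 2) : ℝ) : ℂ) + ((-(Real.pi / 2) : ℝ) : ℂ) * Complex.I := by
    push_cast; field_simp; ring
  unfold qc
  rw [e1, e2, Complex.exp_add, Complex.exp_add, Complex.exp_mul_I, Complex.exp_mul_I,
    ← Complex.ofReal_cos, ← Complex.ofReal_sin, ← Complex.ofReal_cos, ← Complex.ofReal_sin,
    ← Complex.ofReal_exp, ← Complex.ofReal_exp]
  simp only [Real.cos_neg, Real.sin_neg, Real.cos_pi_div_two, Real.sin_pi_div_two]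
  have hden : Complex.exp ((h : ℂ) / 2) - Complex.exp (-(h : ℂ) / 2) =
      ((2 * Real.sinh (h / 2) : ℝ) : ℂ) := by
    rw [Real.sinh_eq]
    push_cast
    ring_nf
  rw [hden]
  have h2s : ((2 * Real.sinh (h / 2) : ℝ) : ℂ) ≠ 0 := by
    exact_mod_cast mul_ne_zero two_ne_zero hsinh
  have hsC : Complex.sinh ((h : ℂ) / 2) ≠ 0 := by
    rw [show ((h : ℂ) / 2) = ((h / 2 : ℝ) : ℂ) by push_cast; ring, ← Complex.ofReal_sinh]
    exact_mod_cast hsinh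
  rw [div_eq_iff h2s, Real.cosh_eq]
  push_cast
  field_simp
  ring_nf

/-- On the strange-series line c = a + iπ/h (h > 0), the product [c][c-1] is the
negative real number -cosh(ha/2)cosh(h(a-1)/2)/sinh(h/2)². -/
theorem qnumber_strange_series_negativity (h : ℝ) (hpos : 0 < h) (a : ℝ) :
    let c : ℂ := (a : ℂ) + (Real.pi / h : ℝ) * Complex.I
    qc h c * qc h (c - 1) =
      -((Real.cosh (h * a / 2) * Real.cosh (h * (a - 1) / 2) / Real.sinh (h / 2) ^ 2 : ℝ) : ℂ) ∧
    -(Real.cosh (h * a / 2) * Real.cosh (h * (a - 1) / 2) / Real.sinh (h / 2) ^ 2) < 0 := by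
  intro c
  have hsinh : 0 < Real.sinh (h / 2) := Real.sinh_pos_iff.mpr (by linarith)
  constructor
  · have hc : c = (a : ℂ) + (Real.pi / h : ℝ) * Complex.I := rfl
    have hc1 : c - 1 = ((a - 1 : ℝ) : ℂ) + (Real.pi / h : ℝ) * Complex.I := by
      rw [hc]; push_cast; ring
    rw [hc, hc1, qc_line h hpos a, qc_line h hpos (a - 1)]
    have hI : Complex.I * Complex.I = -1 := Complex.I_mul_I
    push_cast
    ring_nf
    rw [Complex.I_sq]
    ring
  · have h1 : 0 < Real.cosh (h * a / 2) := Real.cosh_pos _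
    have h2 : 0 < Real.cosh (h * (a - 1) / 2) := Real.cosh_pos _
    have h3 : 0 < Real.sinh (h / 2) ^ 2 := by positivity
    have := div_pos (mul_pos h1 h2) h3
    linarith
end
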